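/- arXiv:1409.6792 — 4 statements merged into one kernel-verified Lean document; each statement's English description precedes it below -/
import Mathlib

section
/- Let Z, R, W be finite nonempty types, let α : Z → ℂ, let ψ : Z → R → ℂ satisfy Σ_{r∈R} |ψ z r|² = 1 for every z ∈ Z, let f : Z → W → ℝ, let U be a unitary matrix over ℂ with rows and columns indexed by Z × R, and let M be any matrix over ℂ with rows and columns indexed by W. Then for every y ∈ W, Σ_{(z',r') ∈ Z×R} | Σ_{(z,r) ∈ Z×R} U((z',r'),(z,r)) · α(z) · ψ(z)(r) · (1/√|W|) · Σ_{w∈W} M(y,w) · exp(i·f(z)(w)) |² = (1/|W|) · Σ_{z∈Z} |α(z)|² · | Σ_{w∈W} M(y,w) · exp(i·f(z)(w)) |². (This identity is the mathematical core of the proof that the circuit (F†⊗H^⊗l)D(F⊗H^⊗l) is weakly simulatable whenever F is: the marginal output distribution on the last register depends only on the probabilities |α(z)|² and not on the states ψ(z) or on the unitary U.) -/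
/-!
The state `Σ_{z,r} α z ψ z r (c S z) |z, r⟩`, with `S z = Σ_w M y w exp(i f z w)` and
`c = 1/√|W|`, has squared norm `Σ_z |α z|² |c|² |S z|²` because each `ψ z` is a unit vector,
and applying the unitary `U` does not change that norm.
-/

open Matrix

theorem ofReal_sum_norm_sq_eq_star_dotProduct {𝕜 n : Type*} [RCLike 𝕜] [Fintype n]
    (v : n → 𝕜) : ((∑ i, ‖v i‖ ^ 2 : ℝ) : 𝕜) = star v ⬝ᵥ v := by
  simp [dotProduct, RCLike.conj_mul]

theorem sum_norm_sq_mulVec_of_conjTranspose_mul_self {𝕜 m n : Type*} [RCLike 𝕜] [Fintype m]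
    [Fintype n] [DecidableEq n] {U : Matrix m n 𝕜} (hU : Uᴴ * U = 1) (v : n → 𝕜) :
    ∑ i, ‖(U *ᵥ v) i‖ ^ 2 = ∑ j, ‖v j‖ ^ 2 := by
  apply RCLike.ofReal_injective (K := 𝕜)
  rw [ofReal_sum_norm_sq_eq_star_dotProduct, ofReal_sum_norm_sq_eq_star_dotProduct, star_mulVec,
    ← dotProduct_mulVec, mulVec_mulVec, hU, one_mulVec]

theorem sum_prod_norm_sq_mul_of_sum_norm_sq_eq_one {𝕜 Z R : Type*} [RCLike 𝕜] [Fintype Z]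
    [Fintype R] (a : Z → 𝕜) (ψ : Z → R → 𝕜) (hψ : ∀ z, ∑ r, ‖ψ z r‖ ^ 2 = 1) :
    ∑ q : Z × R, ‖a q.1 * ψ q.1 q.2‖ ^ 2 = ∑ z, ‖a z‖ ^ 2 := by
  simp_rw [Fintype.sum_prod_type, norm_mul, mul_pow, ← Finset.mul_sum, hψ, mul_one]

theorem norm_sq_ofReal_one_div_sqrt (x : ℝ) (hx : 0 ≤ x) :
    ‖((1 / Real.sqrt x : ℝ) : ℂ)‖ ^ 2 = 1 / x := by
  rw [Complex.norm_real, Real.norm_eq_abs, sq_abs, div_pow, one_pow, Real.sq_sqrt hx]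

theorem stmt_0_general {Z R W : Type*} [Fintype Z] [Fintype R] [Fintype W]
    [DecidableEq Z] [DecidableEq R]
    (α : Z → ℂ) (ψ : Z → R → ℂ)
    (hψ : ∀ z : Z, ∑ r : R, ‖ψ z r‖ ^ 2 = 1)
    (f : Z → W → ℝ)
    (U : Matrix (Z × R) (Z × R) ℂ)
    (hU : U * U.conjTranspose = 1)
    (M : Matrix W W ℂ) :
    ∀ y : W,
      ∑ p : Z × R,
          ‖∑ q : Z × R,
              U p q * α q.1 * ψ q.1 q.2 *
                ((1 / Real.sqrt (Fintype.card W) : ℝ) : ℂ) *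
                ∑ w : W, M y w * Complex.exp (Complex.I * (f q.1 w : ℝ))‖ ^ 2
        = (1 / (Fintype.card W : ℝ)) *
            ∑ z : Z, ‖α z‖ ^ 2 *
              ‖∑ w : W, M y w * Complex.exp (Complex.I * (f z w : ℝ))‖ ^ 2 := by
  intro y
  set c : ℂ := ((1 / Real.sqrt (Fintype.card W) : ℝ) : ℂ) with hc
  set S : Z → ℂ := fun z => ∑ w : W, M y w * Complex.exp (Complex.I * (f z w : ℝ))
  calc _ = ∑ p, ‖(U *ᵥ fun q => α q.1 * c * S q.1 * ψ q.1 q.2) p‖ ^ 2 :=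
        Finset.sum_congr rfl fun p _ => by
          congr 2
          exact Finset.sum_congr rfl fun q _ => by ring
    _ = ∑ q : Z × R, ‖α q.1 * c * S q.1 * ψ q.1 q.2‖ ^ 2 :=
        sum_norm_sq_mulVec_of_conjTranspose_mul_self (mul_eq_one_comm.mp hU) _
    _ = ∑ z, ‖α z * c * S z‖ ^ 2 :=
        sum_prod_norm_sq_mul_of_sum_norm_sq_eq_one (fun z => α z * c * S z) ψ hψ
    _ = _ := by
        rw [Finset.mul_sum]
        refine Finset.sum_congr rfl fun z _ => ?_
        rw [norm_mul, norm_mul, mul_pow, mul_pow, hc,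
          norm_sq_ofReal_one_div_sqrt _ (Nat.cast_nonneg _)]
        ring

/-- The marginal output distribution of the circuit
`(F† ⊗ H^⊗l) D (F ⊗ H^⊗l)` on the last register depends only on the
probabilities `|α z|²`, not on the states `ψ z` or the unitary `U`. -/
theorem stmt_0 {Z R W : Type*} [Fintype Z] [Fintype R] [Fintype W]
    [DecidableEq Z] [DecidableEq R]
    [Nonempty Z] [Nonempty R] [Nonempty W]
    (α : Z → ℂ) (ψ : Z → R → ℂ)
    (hψ : ∀ z : Z, ∑ r : R, ‖ψ z r‖ ^ 2 = 1)
    (f : Z → W → ℝ)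
    (U : Matrix (Z × R) (Z × R) ℂ)
    (hU : U * U.conjTranspose = 1)
    (M : Matrix W W ℂ) :
    ∀ y : W,
      ∑ p : Z × R,
          ‖∑ q : Z × R,
              U p q * α q.1 * ψ q.1 q.2 *
                ((1 / Real.sqrt (Fintype.card W) : ℝ) : ℂ) *
                ∑ w : W, M y w * Complex.exp (Complex.I * (f q.1 w : ℝ))‖ ^ 2
        = (1 / (Fintype.card W : ℝ)) *
            ∑ z : Z, ‖α z‖ ^ 2 *
              ‖∑ w : W, M y w * Complex.exp (Complex.I * (f z w : ℝ))‖ ^ 2 :=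
  stmt_0_general α ψ hψ f U hU M
end

section
/- For every m ∈ ℕ and every s ∈ ℕ, the product ∏_{k=1}^{m} (1 + exp(2πi·s/2^k)) over the complex numbers equals 2^m if 2^m divides s, and equals 0 otherwise. -/
/-!
Induction on `m`. The new factor `1 + exp (2πis / 2^(m+1))` only matters when `2^m ∣ s`
(otherwise the product is already `0`), and then writing `s = 2^m t` turns it into
`1 + (-1)^t`, which is `2` or `0` according as `2^(m+1) ∣ s` or not.
-/
lemma one_add_neg_one_pow_eq_ite {R : Type*} [Ring R] (t : ℕ) :
    1 + (-1 : R) ^ t = if 2 ∣ t then 2 else 0 := by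
  split_ifs with ht
  · rw [(even_iff_two_dvd.mpr ht).neg_one_pow]; norm_num
  · rw [(Nat.not_even_iff_odd.mp (mt even_iff_two_dvd.mp ht)).neg_one_pow]; simp

lemma Complex.exp_two_pi_I_mul_two_pow_mul_div_two_pow_succ (m t : ℕ) :
    Complex.exp (2 * Real.pi * Complex.I * (2 ^ m * t : ℕ) / 2 ^ (m + 1)) = (-1) ^ t := by
  have hexp : (2 * Real.pi * Complex.I * (2 ^ m * t : ℕ) / 2 ^ (m + 1) : ℂ)
      = t * (Real.pi * Complex.I) := by
    push_cast
    field_simp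
    ring
  rw [hexp, Complex.exp_nat_mul, Complex.exp_pi_mul_I]

lemma one_add_exp_two_pi_I_div_two_pow_succ {m s : ℕ} (hs : 2 ^ m ∣ s) :
    1 + Complex.exp (2 * Real.pi * Complex.I * s / 2 ^ (m + 1))
      = if 2 ^ (m + 1) ∣ s then 2 else 0 := by
  obtain ⟨t, rfl⟩ := hs
  rw [Complex.exp_two_pi_I_mul_two_pow_mul_div_two_pow_succ, one_add_neg_one_pow_eq_ite]
  simp only [pow_succ, Nat.mul_dvd_mul_iff_left (Nat.two_pow_pos m)]

/-- `∏_{k=1}^{m} (1 + e^{2πi s / 2^k}) = 2^m` if `2^m ∣ s`, and `0` otherwise. -/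
theorem stmt_1 (m s : ℕ) :
    ∏ k ∈ Finset.Icc 1 m,
        (1 + Complex.exp (2 * Real.pi * Complex.I * s / 2 ^ k))
      = if 2 ^ m ∣ s then (2 : ℂ) ^ m else 0 := by
  induction m with
  | zero => simp
  | succ m ih =>
    rw [Finset.prod_Icc_succ_top (Nat.le_add_left 1 m), ih]
    by_cases hm : 2 ^ m ∣ s
    · rw [if_pos hm, one_add_exp_two_pi_I_div_two_pow_succ hm]
      split_ifs <;> ring
    · have hm1 : ¬ 2 ^ (m + 1) ∣ s := fun h => hm ((pow_dvd_pow 2 m.le_succ).trans h)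
      rw [if_neg hm, if_neg hm1, zero_mul]
end

section
/- Let s, m ∈ ℕ. For k ∈ {1,…,m} let v_k ∈ ℂ² be the vector H · R(2πs/2^k) · H · e₀, where e₀ = (1,0), and define w : ({0,1}^m) → ℂ by w(x) = ∏_{k=1}^{m} (v_k)_{x_k} (the tensor product of the vectors v_1,…,v_m). Then: (a) if 2^m divides s, then w(x) = 1 when x = 0^m and w(x) = 0 otherwise (i.e., the tensor product state equals |0^m⟩); and (b) if 2^m does not divide s, then w(0^m) = 0 (i.e., the tensor product state is orthogonal to |0^m⟩). -/
open scoped BigOperators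

theorem hrh_aux (e : ℂ) :
    ((((1 / Real.sqrt 2 : ℝ) : ℂ) • !![1, 1; 1, -1]) * !![1, 0; 0, e] *
      (((1 / Real.sqrt 2 : ℝ) : ℂ) • !![1, 1; 1, -1])).mulVec ![1, 0]
    = ![(1 + e)/2, (1 - e)/2] := by
  have h2 : ((Real.sqrt 2 : ℝ) : ℂ) * ((Real.sqrt 2 : ℝ) : ℂ) = 2 := by
    rw [← Complex.ofReal_mul, Real.mul_self_sqrt (by norm_num)]
    norm_num
  funext i
  fin_cases i <;>
    simp [Matrix.mulVec, Matrix.mul_apply, Fin.sum_univ_two, dotProduct,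
      Matrix.smul_apply, div_eq_mul_inv] <;>
    field_simp <;>
    first
    | tauto
    | (ring_nf; rw [show ((Real.sqrt 2:ℝ):ℂ)^2 = 2 by rw [sq]; exact h2]; ring)

/-- correctness of the OR reduction circuit: the ancilla output state
`⊗_{k=1}^m H·R(2πs/2^k)·H·|0⟩` equals `|0^m⟩` when `2^m ∣ s` and is orthogonal
to `|0^m⟩` otherwise. -/
theorem stmt_2 (s m : ℕ)
    (H : Matrix (Fin 2) (Fin 2) ℂ)
    (hH : H = ((1 / Real.sqrt 2 : ℝ) : ℂ) • !![1, 1; 1, -1])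
    (Rmat : ℝ → Matrix (Fin 2) (Fin 2) ℂ)
    (hR : ∀ θ : ℝ, Rmat θ = !![1, 0; 0, Complex.exp (Complex.I * θ)])
    (v : Fin m → Fin 2 → ℂ)
    (hv : ∀ k : Fin m,
      v k = (H * Rmat (2 * Real.pi * s / 2 ^ (k.1 + 1)) * H).mulVec ![1, 0])
    (w : (Fin m → Fin 2) → ℂ)
    (hw : ∀ x : Fin m → Fin 2, w x = ∏ k : Fin m, v k (x k)) :
    (2 ^ m ∣ s → ∀ x : Fin m → Fin 2,
        w x = if x = (fun _ => 0) then 1 else 0) ∧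
    (¬ 2 ^ m ∣ s → w (fun _ => 0) = 0) := by
  -- closed form for v
  have hvk : ∀ k : Fin m, v k =
      ![(1 + Complex.exp (Complex.I * ((2 * Real.pi * s / 2 ^ (k.1 + 1) : ℝ) : ℂ)))/2,
        (1 - Complex.exp (Complex.I * ((2 * Real.pi * s / 2 ^ (k.1 + 1) : ℝ) : ℂ)))/2] := by
    intro k; rw [hv k, hH, hR]; exact hrh_aux _
  constructor
  · intro hdvd x
    -- each exp factor is 1
    have hexp : ∀ k : Fin m,
        Complex.exp (Complex.I * ((2 * Real.pi * s / 2 ^ (k.1 + 1) : ℝ) : ℂ)) = 1 := by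
      intro k
      obtain ⟨c, hc⟩ : (2 : ℕ) ^ (k.1 + 1) ∣ s :=
        dvd_trans (pow_dvd_pow 2 k.isLt) hdvd
      have harg : ((2 * Real.pi * s / 2 ^ (k.1 + 1) : ℝ) : ℂ) = (c : ℤ) * (2 * Real.pi) := by
        push_cast
        rw [hc]
        push_cast
        have h2 : ((2:ℂ) ^ (k.1+1)) ≠ 0 := pow_ne_zero _ two_ne_zero
        field_simp
      rw [harg]
      have := Complex.exp_int_mul_two_pi_mul_I (c : ℤ)
      rw [← this]
      push_cast
      ring_nf
    have hv01 : ∀ k : Fin m, ∀ i : Fin 2, v k i = if i = 0 then 1 else 0 := by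
      intro k i
      rw [hvk k, hexp k]
      fin_cases i <;> norm_num
    rw [hw]
    by_cases hx : x = fun _ => 0
    · subst hx
      simp only [if_pos rfl]
      apply Finset.prod_eq_one
      intro k _
      rw [hv01 k 0]; simp
    · rw [if_neg hx]
      obtain ⟨k, hk⟩ : ∃ k, x k ≠ 0 := by
        by_contra h
        push_neg at h
        exact hx (funext h)
      apply Finset.prod_eq_zero (Finset.mem_univ k)
      rw [hv01 k (x k), if_neg hk]
  · intro hndvd
    have hs0 : s ≠ 0 := by rintro rfl; exact hndvd (dvd_zero _)
    set j := (s.factorization 2) with hj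
    have hjm : j < m := by
      by_contra h
      push_neg at h
      exact hndvd (dvd_trans (pow_dvd_pow 2 h) (Nat.ordProj_dvd s 2))
    obtain ⟨o, ho⟩ : (2:ℕ) ^ j ∣ s := Nat.ordProj_dvd s 2
    have hodd : Odd o := by
      rcases Nat.even_or_odd o with he | ho'
      · exfalso
        obtain ⟨t, ht⟩ := he
        have : (2:ℕ) ^ (j+1) ∣ s := ⟨t, by rw [ho, ht]; ring⟩
        exact (Nat.pow_succ_factorization_not_dvd hs0 Nat.prime_two) this
      · exact ho'
    -- the j-th factor vanishes
    have hexpj : Complex.exp (Complex.I * ((2 * Real.pi * s / 2 ^ (j + 1) : ℝ) : ℂ)) = -1 := by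
      have harg : ((2 * Real.pi * s / 2 ^ (j + 1) : ℝ) : ℂ) = (o : ℕ) * Real.pi := by
        push_cast
        rw [ho]
        push_cast
        have h2 : ((2:ℂ) ^ j) ≠ 0 := pow_ne_zero _ two_ne_zero
        rw [pow_succ]
        field_simp
      rw [harg, show Complex.I * ((o:ℕ) * (Real.pi:ℂ)) = (o:ℕ) * ((Real.pi:ℂ) * Complex.I) by ring,
        Complex.exp_nat_mul, Complex.exp_pi_mul_I]
      exact hodd.neg_one_pow
    rw [hw]
    apply Finset.prod_eq_zero (Finset.mem_univ (⟨j, hjm⟩ : Fin m))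
    rw [hvk ⟨j, hjm⟩]
    simp only
    rw [hexpj]
    norm_num
end

section
/- Work with 8×8 complex matrices with rows and columns indexed by triples (a,b,c) ∈ {0,1}³. For θ ∈ ℝ, let D₁₂(θ) be the diagonal matrix whose diagonal entry at (a,b,c) is e^{iθ} if a = b = 1 and 1 otherwise, let D₁₃(θ) be the diagonal matrix whose diagonal entry at (a,b,c) is e^{iθ} if a = c = 1 and 1 otherwise, and let D₂₃(θ) be the diagonal matrix whose diagonal entry at (a,b,c) is e^{iθ} if b = c = 1 and 1 otherwise. Let H₂ = I⊗H⊗I and H₃ = I⊗I⊗H (Kronecker products). Then for all θ, θ' ∈ ℝ: (a) the matrices H₂·D₁₂(θ)·H₂ and H₃·D₁₃(θ')·H₃ commute (two gates sharing only their control qubit), and (b) the matrices H₃·D₁₃(θ)·H₃ and H₃·D₂₃(θ')·H₃ commute (two gates sharing only their target qubit). -/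
open Kronecker

/-- the gates of the commuting OR reduction circuit — controlled
phase-shift gates sandwiched between Hadamards on the target qubit — commute,
both when sharing only their control qubit and when sharing only their target qubit. -/
theorem stmt_10
    (H : Matrix (Fin 2) (Fin 2) ℂ)
    (hH : H = ((1 / Real.sqrt 2 : ℝ) : ℂ) • !![1, 1; 1, -1])
    (D₁₂ D₁₃ D₂₃ : ℝ → Matrix (Fin 2 × Fin 2 × Fin 2) (Fin 2 × Fin 2 × Fin 2) ℂ)
    (hD₁₂ : ∀ θ : ℝ, D₁₂ θ = Matrix.diagonal (fun p =>
      if p.1 = 1 ∧ p.2.1 = 1 then Complex.exp (Complex.I * θ) else 1))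
    (hD₁₃ : ∀ θ : ℝ, D₁₃ θ = Matrix.diagonal (fun p =>
      if p.1 = 1 ∧ p.2.2 = 1 then Complex.exp (Complex.I * θ) else 1))
    (hD₂₃ : ∀ θ : ℝ, D₂₃ θ = Matrix.diagonal (fun p =>
      if p.2.1 = 1 ∧ p.2.2 = 1 then Complex.exp (Complex.I * θ) else 1))
    (H₂ H₃ : Matrix (Fin 2 × Fin 2 × Fin 2) (Fin 2 × Fin 2 × Fin 2) ℂ)
    (hH₂ : H₂ = (1 : Matrix (Fin 2) (Fin 2) ℂ) ⊗ₖ (H ⊗ₖ (1 : Matrix (Fin 2) (Fin 2) ℂ)))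
    (hH₃ : H₃ = (1 : Matrix (Fin 2) (Fin 2) ℂ) ⊗ₖ ((1 : Matrix (Fin 2) (Fin 2) ℂ) ⊗ₖ H)) :
    ∀ θ θ' : ℝ,
      Commute (H₂ * D₁₂ θ * H₂) (H₃ * D₁₃ θ' * H₃) ∧
      Commute (H₃ * D₁₃ θ * H₃) (H₃ * D₂₃ θ' * H₃) := by
  intro θ θ'
  -- H is an involution
  have hHsq : H * H = 1 := by
    subst hH
    have h2 : (Real.sqrt 2 : ℂ) * (Real.sqrt 2 : ℂ) = 2 := by
      rw [← Complex.ofReal_mul, Real.mul_self_sqrt (by norm_num)]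
      norm_num
    ext i j
    fin_cases i <;> fin_cases j <;>
      simp [Matrix.mul_apply, Fin.sum_univ_two, Matrix.one_apply] <;>
      field_simp <;> (first | linear_combination h2 | linear_combination (-2 : ℂ) * h2 | linear_combination (2 : ℂ) * h2 | linear_combination -h2)
  have hH₃sq : H₃ * H₃ = 1 := by
    subst hH₃
    rw [← Matrix.mul_kronecker_mul, ← Matrix.mul_kronecker_mul, hHsq]
    simp
  -- H₂ and H₃ commute
  have c1 : Commute H₂ H₃ := by
    subst hH₂ hH₃
    unfold Commute SemiconjBy
    rw [← Matrix.mul_kronecker_mul, ← Matrix.mul_kronecker_mul,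
        ← Matrix.mul_kronecker_mul, ← Matrix.mul_kronecker_mul]
    simp
  -- H₂ commutes with D₁₃ θ'
  have c2 : Commute H₂ (D₁₃ θ') := by
    unfold Commute SemiconjBy
    rw [hH₂, hD₁₃]
    ext ⟨a, b, c⟩ ⟨d, e, f⟩
    rw [Matrix.mul_diagonal, Matrix.diagonal_mul]
    by_cases had : a = d
    · by_cases hcf : c = f
      · subst had; subst hcf; exact mul_comm _ _
      · simp [Matrix.kroneckerMap_apply, Matrix.one_apply, hcf]
    · simp [Matrix.kroneckerMap_apply, Matrix.one_apply, had]
  -- H₃ commutes with D₁₂ θ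
  have c3 : Commute H₃ (D₁₂ θ) := by
    unfold Commute SemiconjBy
    rw [hH₃, hD₁₂]
    ext ⟨a, b, c⟩ ⟨d, e, f⟩
    rw [Matrix.mul_diagonal, Matrix.diagonal_mul]
    by_cases had : a = d
    · by_cases hbe : b = e
      · subst had; subst hbe; exact mul_comm _ _
      · simp [Matrix.kroneckerMap_apply, Matrix.one_apply, hbe]
    · simp [Matrix.kroneckerMap_apply, Matrix.one_apply, had]
  -- diagonal matrices commute
  have cdiag : ∀ (u v : Fin 2 × Fin 2 × Fin 2 → ℂ),
      Commute (Matrix.diagonal u) (Matrix.diagonal v) := by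
    intro u v
    unfold Commute SemiconjBy
    rw [Matrix.diagonal_mul_diagonal, Matrix.diagonal_mul_diagonal]
    ext p q
    by_cases h : p = q <;> simp [Matrix.diagonal_apply, h, mul_comm]
  have c4 : Commute (D₁₂ θ) (D₁₃ θ') := by
    rw [hD₁₂, hD₁₃]; exact cdiag _ _
  have c5 : Commute (D₁₃ θ) (D₂₃ θ') := by
    rw [hD₁₃, hD₂₃]; exact cdiag _ _
  constructor
  · -- Commute (H₂ * D₁₂ θ * H₂) (H₃ * D₁₃ θ' * H₃)
    have cA3 : Commute (H₂ * D₁₂ θ * H₂) H₃ :=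
      ((c1.mul_left c3.symm).mul_left c1)
    have cAD : Commute (H₂ * D₁₂ θ * H₂) (D₁₃ θ') :=
      ((c2.mul_left c4).mul_left c2)
    exact (cA3.mul_right cAD).mul_right cA3
  · -- Commute (H₃ * D₁₃ θ * H₃) (H₃ * D₂₃ θ' * H₃)
    unfold Commute SemiconjBy
    calc H₃ * D₁₃ θ * H₃ * (H₃ * D₂₃ θ' * H₃)
        = H₃ * D₁₃ θ * (H₃ * H₃) * D₂₃ θ' * H₃ := by noncomm_ring
      _ = H₃ * (D₁₃ θ * D₂₃ θ') * H₃ := by rw [hH₃sq]; noncomm_ring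
      _ = H₃ * (D₂₃ θ' * D₁₃ θ) * H₃ := by rw [c5]
      _ = H₃ * D₂₃ θ' * (H₃ * H₃) * D₁₃ θ * H₃ := by rw [hH₃sq]; noncomm_ring
      _ = H₃ * D₂₃ θ' * H₃ * (H₃ * D₁₃ θ * H₃) := by noncomm_ring
end
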